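/- arXiv:1307.5342 — 2 statements merged into one kernel-verified Lean document; each statement's English description precedes it below -/
import Mathlib

section
/- Let d ≥ 2 and γ > (d−1)/(d+1). Let Γ ⊂ 𝒬_AB and define S^γ_Γ(x) = Σ_{P∈Γ} |Q_P|^γ χ_{Q_P}(x). Let x ∈ ℝ^d be such that the set { |Q_P| : P ∈ Γ, x ∈ Q_P } is nonempty and attains its maximum at some P^x ∈ Γ (i.e. x ∈ Q_{P^x} and |Q_P| ≤ |Q_{P^x}| for every P ∈ Γ with x ∈ Q_P). Then |Q_{P^x}|^γ ≤ S^γ_Γ(x) ≤ C |Q_{P^x}|^{γ − (d−1)/(d+1)}, where C > 0 depends only on d and γ. -/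
open scoped ENNReal NNReal
open MeasureTheory

namespace Shear

/-- Index set `𝒬_AB` of the shearlet system: direction, scale, shear, translation. -/
structure Index (d : ℕ) where
  dir : Fin d
  j : ℕ
  l : Fin (d - 1) → ℤ
  k : Fin d → ℤ
  hl : ∀ i, |l i| ≤ 2 ^ j

/-- Lebesgue measure of the anisotropic cube `Q_P`, namely `2^{-j(d+1)}`. -/
noncomputable def cubeVol {d : ℕ} (P : Index d) : ℝ := (2 : ℝ) ^ (-(P.j : ℤ) * (d + 1))

/-- The inverse anisotropic dilation `A_(𝔡)^{-j}`. -/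
noncomputable def shearAinv (d : ℕ) (𝔡 : Fin d) (j : ℕ) : Matrix (Fin d) (Fin d) ℝ :=
  Matrix.diagonal fun i => if i = 𝔡 then (4 : ℝ) ^ (-(j : ℤ)) else (2 : ℝ) ^ (-(j : ℤ))

/-- The shear matrix `B_(𝔡)^{[ℓ]}`. -/
noncomputable def shearB (d : ℕ) (𝔡 : Fin d) (l : Fin (d - 1) → ℤ) : Matrix (Fin d) (Fin d) ℝ :=
  fun i c =>
    if hic : i = c then 1
    else if hi : i = 𝔡 then
      (if hc : (c : ℕ) < (𝔡 : ℕ) then (l ⟨c, by have := 𝔡.isLt; omega⟩ : ℝ)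
       else (l ⟨(c : ℕ) - 1, by
          have h1 : (𝔡 : ℕ) ≠ (c : ℕ) := fun h => hic (hi.trans (Fin.ext h))
          have := c.isLt; have := 𝔡.isLt; omega⟩ : ℝ))
    else 0

/-- The anisotropic cube `Q_P = A_(𝔡)^{-j} B_(𝔡)^{[-ℓ]} ([0,1)^d + k)`. -/
noncomputable def shearQ {d : ℕ} (P : Index d) : Set (Fin d → ℝ) :=
  (fun y => (shearAinv d P.dir P.j * shearB d P.dir fun i => -P.l i).mulVec y) ''
    {y : Fin d → ℝ | ∀ i, (P.k i : ℝ) ≤ y i ∧ y i < (P.k i : ℝ) + 1}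

/-- The measure `ν_β(Γ) = Σ_{P ∈ Γ} |Q_P|^β`. -/
noncomputable def nu {d : ℕ} (β : ℝ) (Γ : Set (Index d)) : ℝ≥0∞ :=
  ∑' P : Γ, ENNReal.ofReal (cubeVol (P : Index d) ^ β)

/-- The quasi-norm of the shear anisotropic inhomogeneous Besov sequence space `b^{s,q}_p(AB)`
(finite integrability parameters). -/
noncomputable def besovNorm {d : ℕ} (s p q : ℝ) (c : Index d → ℂ) : ℝ≥0∞ :=
  (∑' (𝔡 : Fin d) (j : ℕ) (l : {l : Fin (d - 1) → ℤ // ∀ i, |l i| ≤ 2 ^ j}),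
      (∑' k : Fin d → ℤ,
          (ENNReal.ofReal (((2 : ℝ) ^ (-(j : ℤ) * (d + 1))) ^ (-s + 1 / p - 1 / 2)) *
              (‖c ⟨𝔡, j, l.1, k, l.2⟩‖₊ : ℝ≥0∞)) ^ p) ^ (q / p)) ^ (1 / q)

/-- The quasi-norm of the shear anisotropic inhomogeneous Triebel–Lizorkin sequence space
`f^{s,q}_p(AB)`, `0 < q ≤ ∞`. -/
noncomputable def tlNorm {d : ℕ} (s p : ℝ) (q : ℝ≥0∞) (c : Index d → ℂ) : ℝ≥0∞ :=
  (∫⁻ x : Fin d → ℝ,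
      (if q = ∞ then
          ⨆ P : Index d,
            ENNReal.ofReal (cubeVol P ^ (-s - 1 / 2)) * (‖c P‖₊ : ℝ≥0∞) *
              (shearQ P).indicator (fun _ => (1 : ℝ≥0∞)) x
        else
          (∑' P : Index d,
              (ENNReal.ofReal (cubeVol P ^ (-s - 1 / 2)) * (‖c P‖₊ : ℝ≥0∞) *
                  (shearQ P).indicator (fun _ => (1 : ℝ≥0∞)) x) ^ q.toReal) ^ (1 / q.toReal)) ^ p)
    ^ (1 / p)

/-- Non-increasing rearrangement of a sequence with respect to a (set-function) measure `ν`. -/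
noncomputable def rearr {D : Type*} (ν : Set D → ℝ≥0∞) (c : D → ℂ) (t : ℝ≥0∞) : ℝ≥0∞ :=
  sInf {lam : ℝ≥0∞ | ν {I | lam < (‖c I‖₊ : ℝ≥0∞)} ≤ t}

/-- Quasi-norm of the weighted discrete Lorentz space `ℓ^{p,μ}(u,ν)`. -/
noncomputable def lorentzNorm {D : Type*} (ν : Set D → ℝ≥0∞) (u : D → ℝ) (p : ℝ) (μ : ℝ≥0∞)
    (c : D → ℂ) : ℝ≥0∞ :=
  if μ = ∞ then
    ⨆ t : {t : ℝ // 0 < t},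
      ENNReal.ofReal (t.1 ^ (1 / p)) * rearr ν (fun I => (u I : ℂ) * c I) (ENNReal.ofReal t.1)
  else
    (∫⁻ t in Set.Ioi (0 : ℝ),
        (ENNReal.ofReal (t ^ (1 / p)) *
              rearr ν (fun I => (u I : ℂ) * c I) (ENNReal.ofReal t)) ^ μ.toReal /
          ENNReal.ofReal t) ^ (1 / μ.toReal)

/-- `Σ_{t,ν}`: sequences supported on a set `Γ` with `ν(Γ) ≤ t`. -/
def SigmaSet {D : Type*} (ν : Set D → ℝ≥0∞) (t : ℝ≥0∞) : Set (D → ℂ) :=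
  {c | ∃ Γ : Set D, ν Γ ≤ t ∧ ∀ P ∉ Γ, c P = 0}

/-- Restricted approximation error `σ_ν(t,s)_𝔣`. -/
noncomputable def approxErr {D : Type*} (F : (D → ℂ) → ℝ≥0∞) (ν : Set D → ℝ≥0∞) (t : ℝ≥0∞)
    (s : D → ℂ) : ℝ≥0∞ :=
  ⨅ c ∈ SigmaSet ν t, F (fun P => s P - c P)

/-- Quasi-norm of the restricted approximation space `A^ξ_μ(𝔣,ν)`. -/
noncomputable def approxNorm {D : Type*} (F : (D → ℂ) → ℝ≥0∞) (ν : Set D → ℝ≥0∞) (ξ : ℝ)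
    (μ : ℝ≥0∞) (s : D → ℂ) : ℝ≥0∞ :=
  if μ = ∞ then
    ⨆ t : {t : ℝ // 0 < t}, ENNReal.ofReal (t.1 ^ ξ) * approxErr F ν (ENNReal.ofReal t.1) s
  else
    (∫⁻ t in Set.Ioi (0 : ℝ),
        (ENNReal.ofReal (t ^ ξ) * approxErr F ν (ENNReal.ofReal t) s) ^ μ.toReal /
          ENNReal.ofReal t) ^ (1 / μ.toReal)

/-- Peetre `K`-functional for a couple of quasi-normed sequence spaces. -/
noncomputable def Kfun {D : Type*} (X Y : (D → ℂ) → ℝ≥0∞) (t : ℝ≥0∞) (s : D → ℂ) : ℝ≥0∞ :=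
  ⨅ a : D → ℂ, X a + t * Y (fun P => s P - a P)

/-- Quasi-norm of the real interpolation space `(X,Y)_{θ,q}`. -/
noncomputable def interpNorm {D : Type*} (X Y : (D → ℂ) → ℝ≥0∞) (θ : ℝ) (q : ℝ≥0∞)
    (s : D → ℂ) : ℝ≥0∞ :=
  if q = ∞ then
    ⨆ t : {t : ℝ // 0 < t}, ENNReal.ofReal (t.1 ^ (-θ)) * Kfun X Y (ENNReal.ofReal t.1) s
  else
    (∫⁻ t in Set.Ioi (0 : ℝ),
        (ENNReal.ofReal (t ^ (-θ)) * Kfun X Y (ENNReal.ofReal t) s) ^ q.toReal /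
          ENNReal.ofReal t) ^ (1 / q.toReal)

end Shear

/-!
For fixed direction `𝔡`, scale `j` and shear `ℓ`, the cubes `Q_{(𝔡,j,ℓ,k)}` are the images of the
disjoint unit cubes `[0,1)^d + k` under one injective linear map, so `x` lies in at most one of them.
A cube of `Γ` containing `x` is no larger than `Q_{P^x}`, i.e. its scale is `j ≥ j_x := P^x.j`, and
at scale `j` there are at most `d (3·2^j)^{d-1}` pairs `(𝔡, ℓ)`. Hence
`S^γ_Γ(x) ≤ d 3^{d-1} ∑_{j ≥ j_x} ρ^j` with `ρ = 2^{(d-1)-(d+1)γ} < 1`, and the tail of the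
geometric series is a multiple of `ρ^{j_x} = |Q_{P^x}|^{γ-(d-1)/(d+1)}`.
-/

lemma tsum_const_intVec_abs_le {ι : Type*} [Fintype ι] [DecidableEq ι] (N : ℤ) (c : ℝ≥0∞) :
    ∑' _ : {l : ι → ℤ // ∀ i, |l i| ≤ N}, c = ((2 * N + 1).toNat : ℝ≥0∞) ^ Fintype.card ι * c := by
  let box := Fintype.piFinset fun _ : ι => Finset.Icc (-N) N
  have e : {l : ι → ℤ // ∀ i, |l i| ≤ N} ≃ box :=
    Equiv.subtypeEquivRight fun l => by simp [box, abs_le]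
  rw [← e.symm.tsum_eq (fun _ => c), Finset.tsum_subtype box fun _ => c, Finset.sum_const,
    nsmul_eq_mul, Fintype.card_piFinset, Finset.prod_const, Int.card_Icc, Finset.card_univ,
    show N + 1 - -N = 2 * N + 1 by ring]
  push_cast
  rfl

lemma ENNReal.tsum_geometric_tail (r : ℝ≥0∞) (m : ℕ) :
    ∑' n : ℕ, (if m ≤ n then r ^ n else 0) = r ^ m * (1 - r)⁻¹ := by
  rw [← ENNReal.summable.sum_add_tsum_nat_add' (k := m), Finset.sum_eq_zero fun n hn =>
    if_neg (by simpa using hn), zero_add, ← ENNReal.tsum_geometric, ← ENNReal.tsum_mul_left]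
  exact tsum_congr fun n => by rw [if_pos (by omega), pow_add, mul_comm]

lemma ENNReal.ofReal_mul_pow_mul_one_sub_inv {a ρ : ℝ} (ha : 0 ≤ a) (hρ₀ : 0 ≤ ρ) (hρ₁ : ρ < 1)
    (m : ℕ) : ENNReal.ofReal a * (ENNReal.ofReal ρ ^ m * (1 - ENNReal.ofReal ρ)⁻¹)
      = ENNReal.ofReal (a * (1 - ρ)⁻¹ * ρ ^ m) := by
  rw [ENNReal.ofReal_mul (by have := sub_pos.2 hρ₁; positivity), ENNReal.ofReal_mul ha,
    ENNReal.ofReal_inv_of_pos (sub_pos.2 hρ₁), ENNReal.ofReal_sub _ hρ₀, ENNReal.ofReal_one,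
    ENNReal.ofReal_pow hρ₀]
  ring

namespace Shear

open scoped Matrix

variable {d : ℕ}

lemma shearB_mulVec_apply_of_ne (𝔡 : Fin d) (l : Fin (d - 1) → ℤ) (v : Fin d → ℝ) {i : Fin d}
    (hi : i ≠ 𝔡) : (shearB d 𝔡 l *ᵥ v) i = v i := by
  rw [Matrix.mulVec, dotProduct, Finset.sum_eq_single i]
  · simp [shearB]
  · intro c _ hc
    simp [shearB, Ne.symm hc, hi]
  · simp

lemma shearB_mulVec_apply_self (𝔡 : Fin d) (l : Fin (d - 1) → ℤ) (v : Fin d → ℝ) :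
    (shearB d 𝔡 l *ᵥ v) 𝔡 = v 𝔡 + ∑ c ∈ Finset.univ.erase 𝔡, shearB d 𝔡 l 𝔡 c * v c := by
  rw [Matrix.mulVec, dotProduct, ← Finset.add_sum_erase _ _ (Finset.mem_univ 𝔡)]
  simp [shearB]

lemma shearB_mulVec_injective (𝔡 : Fin d) (l : Fin (d - 1) → ℤ) :
    Function.Injective (shearB d 𝔡 l).mulVec := by
  intro v w h
  have off_diag : ∀ i ≠ 𝔡, v i = w i := fun i hi => by
    rw [← shearB_mulVec_apply_of_ne 𝔡 l v hi, ← shearB_mulVec_apply_of_ne 𝔡 l w hi, h]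
  funext i
  rcases eq_or_ne i 𝔡 with rfl | hi
  · have h𝔡 := congrFun h i
    rw [shearB_mulVec_apply_self, shearB_mulVec_apply_self,
      Finset.sum_congr rfl fun c hc => by rw [off_diag c (Finset.ne_of_mem_erase hc)]] at h𝔡
    exact add_right_cancel h𝔡
  · exact off_diag i hi

lemma shearAinv_mulVec_injective (𝔡 : Fin d) (j : ℕ) :
    Function.Injective (shearAinv d 𝔡 j).mulVec := by
  intro v w h
  funext i
  have hi := congrFun h i
  simp only [shearAinv, Matrix.mulVec_diagonal] at hi
  exact mul_left_cancel₀ (by split_ifs <;> positivity) hi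

lemma Index.k_eq_of_mem_shearQ {𝔡 : Fin d} {j : ℕ} {l : Fin (d - 1) → ℤ}
    {hl : ∀ i, |l i| ≤ 2 ^ j} {k k' : Fin d → ℤ} {x : Fin d → ℝ}
    (h : x ∈ shearQ ⟨𝔡, j, l, k, hl⟩) (h' : x ∈ shearQ ⟨𝔡, j, l, k', hl⟩) : k = k' := by
  obtain ⟨y, hy, rfl⟩ := h
  obtain ⟨y', hy', hyy'⟩ := h'
  simp only [← Matrix.mulVec_mulVec] at hyy'
  obtain rfl := shearB_mulVec_injective _ _ (shearAinv_mulVec_injective _ _ hyy')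
  funext i
  exact (Int.floor_eq_iff.mpr (hy i)).symm.trans (Int.floor_eq_iff.mpr (hy' i))

lemma tsum_indicator_shearQ_le_one (𝔡 : Fin d) (j : ℕ) (l : Fin (d - 1) → ℤ)
    (hl : ∀ i, |l i| ≤ 2 ^ j) (x : Fin d → ℝ) :
    ∑' k, (shearQ ⟨𝔡, j, l, k, hl⟩).indicator (fun _ => (1 : ℝ≥0∞)) x ≤ 1 := by
  by_cases hx : ∃ k, x ∈ shearQ ⟨𝔡, j, l, k, hl⟩
  · obtain ⟨k₀, hk₀⟩ := hx
    rw [tsum_eq_single k₀ fun k hk =>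
      Set.indicator_of_notMem (fun hxk => hk (Index.k_eq_of_mem_shearQ hxk hk₀)) _]
    exact Set.indicator_le_self _ _ x
  · push Not at hx
    simp [Set.indicator_of_notMem (hx _)]

def Index.equivSigma (d : ℕ) :
    Index d ≃ Σ _ : Fin d, Σ j : ℕ, {l : Fin (d - 1) → ℤ // ∀ i, |l i| ≤ 2 ^ j} × (Fin d → ℤ) where
  toFun P := ⟨P.dir, P.j, ⟨P.l, P.hl⟩, P.k⟩
  invFun σ := ⟨σ.1, σ.2.1, σ.2.2.1.1, σ.2.2.2, σ.2.2.1.2⟩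
  left_inv _ := rfl
  right_inv _ := rfl

lemma tsum_mul_indicator_shearQ_le (x : Fin d → ℝ) (w : ℕ → ℝ≥0∞) :
    ∑' P : Index d, w P.j * (shearQ P).indicator (fun _ => 1) x
      ≤ d * ∑' j : ℕ, (3 * 2 ^ j) ^ (d - 1) * w j := by
  have count (j : ℕ) : ((2 * 2 ^ j + 1 : ℤ).toNat : ℝ≥0∞) ≤ 3 * 2 ^ j := by
    rw [show (2 * 2 ^ j + 1 : ℤ) = ((2 * 2 ^ j + 1 : ℕ) : ℤ) by push_cast; rfl, Int.toNat_natCast]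
    have := Nat.one_le_two_pow (n := j)
    exact_mod_cast (by omega : 2 * 2 ^ j + 1 ≤ 3 * 2 ^ j)
  calc ∑' P : Index d, w P.j * (shearQ P).indicator (fun _ => 1) x
      = ∑' (𝔡 : Fin d) (j : ℕ) (l : {l : Fin (d - 1) → ℤ // ∀ i, |l i| ≤ 2 ^ j}) (k : Fin d → ℤ),
          w j * (shearQ ⟨𝔡, j, l.1, k, l.2⟩).indicator (fun _ => 1) x := by
        rw [← (Index.equivSigma d).symm.tsum_eq, ENNReal.tsum_sigma']
        simp only [ENNReal.tsum_sigma', ENNReal.tsum_prod']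
        rfl
    _ ≤ ∑' (_ : Fin d) (j : ℕ) (_ : {l : Fin (d - 1) → ℤ // ∀ i, |l i| ≤ 2 ^ j}), w j := by
        gcongr with 𝔡 j l
        rw [ENNReal.tsum_mul_left]
        exact mul_le_of_le_one_right' (tsum_indicator_shearQ_le_one 𝔡 j l.1 l.2 x)
    _ ≤ d * ∑' j : ℕ, (3 * 2 ^ j) ^ (d - 1) * w j := by
        simp only [tsum_const_intVec_abs_le, Fintype.card_fin, tsum_fintype, Finset.sum_const,
          Finset.card_univ, nsmul_eq_mul]
        gcongr
        exact count _

lemma two_pow_pred_mul_two_rpow (hd : 1 ≤ d) (γ : ℝ) :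
    (2 : ℝ) ^ (d - 1) * 2 ^ (-((d : ℝ) + 1) * γ)
      = 2 ^ (-((d : ℝ) + 1) * (γ - ((d : ℝ) - 1) / ((d : ℝ) + 1))) := by
  rw [← Real.rpow_natCast, ← Real.rpow_add two_pos, Nat.cast_sub hd]
  congr 1
  field_simp
  ring

lemma cubeVol_rpow (P : Index d) (t : ℝ) :
    cubeVol P ^ t = ((2 : ℝ) ^ (-((d : ℝ) + 1) * t)) ^ P.j := by
  rw [cubeVol, ← Real.rpow_intCast, ← Real.rpow_mul zero_le_two, ← Real.rpow_natCast,
    ← Real.rpow_mul zero_le_two]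
  push_cast
  congr 1
  ring

lemma Index.j_le_of_cubeVol_le {P Q : Index d} (h : cubeVol P ≤ cubeVol Q) : Q.j ≤ P.j := by
  rw [cubeVol, cubeVol, zpow_le_zpow_iff_right₀ one_lt_two, neg_mul, neg_mul, neg_le_neg_iff] at h
  exact_mod_cast le_of_mul_le_mul_right h (by positivity)

lemma tsum_cubeVol_rpow_mul_indicator_le (γ : ℝ) (Γ : Set (Index d)) (x : Fin d → ℝ) (m : ℕ)
    (hm : ∀ P ∈ Γ, x ∈ shearQ P → m ≤ P.j) :
    ∑' P : Γ, ENNReal.ofReal (cubeVol (P : Index d) ^ γ) *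
        (shearQ (P : Index d)).indicator (fun _ => 1) x
      ≤ d * 3 ^ (d - 1) * (ENNReal.ofReal (2 ^ (d - 1) * 2 ^ (-((d : ℝ) + 1) * γ)) ^ m *
          (1 - ENNReal.ofReal (2 ^ (d - 1) * 2 ^ (-((d : ℝ) + 1) * γ)))⁻¹) := by
  set q : ℝ := 2 ^ (-((d : ℝ) + 1) * γ)
  let w (j : ℕ) : ℝ≥0∞ := if m ≤ j then ENNReal.ofReal q ^ j else 0
  have term_le (P : Γ) : ENNReal.ofReal (cubeVol (P : Index d) ^ γ) *
      (shearQ (P : Index d)).indicator (fun _ => 1) x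
        ≤ w (P : Index d).j * (shearQ (P : Index d)).indicator (fun _ => 1) x := by
    by_cases hx : x ∈ shearQ (P : Index d)
    · rw [cubeVol_rpow, ENNReal.ofReal_pow (by positivity)]
      simp only [w, if_pos (hm P P.2 hx), q, le_rfl]
    · simp [hx]
  have scale_eq (j : ℕ) : (3 * 2 ^ j) ^ (d - 1) * w j
      = 3 ^ (d - 1) * if m ≤ j then ENNReal.ofReal (2 ^ (d - 1) * q) ^ j else 0 := by
    by_cases hj : m ≤ j
    · simp only [w, if_pos hj]
      rw [ENNReal.ofReal_mul (by positivity), ENNReal.ofReal_pow zero_le_two, ENNReal.ofReal_ofNat]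
      ring
    · simp only [w, if_neg hj, mul_zero]
  calc ∑' P : Γ, ENNReal.ofReal (cubeVol (P : Index d) ^ γ) *
        (shearQ (P : Index d)).indicator (fun _ => 1) x
      ≤ ∑' P : Γ, w (P : Index d).j * (shearQ (P : Index d)).indicator (fun _ => 1) x :=
        ENNReal.tsum_le_tsum term_le
    _ ≤ ∑' P : Index d, w P.j * (shearQ P).indicator (fun _ => 1) x :=
        ENNReal.tsum_comp_le_tsum_of_injective Subtype.val_injective _
    _ ≤ d * ∑' j : ℕ, (3 * 2 ^ j) ^ (d - 1) * w j := tsum_mul_indicator_shearQ_le x w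
    _ = _ := by
        simp only [scale_eq, ENNReal.tsum_mul_left, ENNReal.tsum_geometric_tail, mul_assoc]

end Shear

/-- Lemma 3.1(a): if `γ > (d−1)/(d+1)` and `P^x` is a largest cube of `Γ` containing `x`, then
`|Q_{P^x}|^γ ≤ S^γ_Γ(x) ≤ C |Q_{P^x}|^{γ−(d−1)/(d+1)}` with `C = C(d,γ)`. -/
theorem S_gamma_bounds_largest_cube (d : ℕ) (hd : 2 ≤ d) (γ : ℝ)
    (hγ : ((d : ℝ) - 1) / ((d : ℝ) + 1) < γ) :
    ∃ C : ℝ, 0 < C ∧ ∀ (Γ : Set (Shear.Index d)) (x : Fin d → ℝ) (Px : Shear.Index d),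
      Px ∈ Γ → x ∈ Shear.shearQ Px →
      (∀ P ∈ Γ, x ∈ Shear.shearQ P → Shear.cubeVol P ≤ Shear.cubeVol Px) →
      ENNReal.ofReal (Shear.cubeVol Px ^ γ) ≤
          (∑' P : Γ, ENNReal.ofReal (Shear.cubeVol (P : Shear.Index d) ^ γ) *
            (Shear.shearQ (P : Shear.Index d)).indicator (fun _ => (1 : ℝ≥0∞)) x) ∧
        (∑' P : Γ, ENNReal.ofReal (Shear.cubeVol (P : Shear.Index d) ^ γ) *
            (Shear.shearQ (P : Shear.Index d)).indicator (fun _ => (1 : ℝ≥0∞)) x) ≤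
          ENNReal.ofReal (C * Shear.cubeVol Px ^ (γ - ((d : ℝ) - 1) / ((d : ℝ) + 1))) := by
  set ρ : ℝ := 2 ^ (-((d : ℝ) + 1) * (γ - ((d : ℝ) - 1) / ((d : ℝ) + 1)))
  have hρ₀ : 0 ≤ ρ := by positivity
  have hρ₁ : ρ < 1 := Real.rpow_lt_one_of_one_lt_of_neg one_lt_two (by nlinarith [sub_pos.2 hγ])
  have hd₀ : (0 : ℝ) < d := by exact_mod_cast (by omega : 0 < d)
  refine ⟨d * 3 ^ (d - 1) * (1 - ρ)⁻¹, by have := sub_pos.2 hρ₁; positivity,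
    fun Γ x Px hPx hx hmax => ⟨?_, ?_⟩⟩
  · simpa [hx] using ENNReal.le_tsum (f := fun P : Γ => ENNReal.ofReal (Shear.cubeVol
      (P : Shear.Index d) ^ γ) * (Shear.shearQ (P : Shear.Index d)).indicator (fun _ => 1) x)
      ⟨Px, hPx⟩
  · have hscale : ∀ P ∈ Γ, x ∈ Shear.shearQ P → Px.j ≤ P.j := fun P hP hxP =>
      Shear.Index.j_le_of_cubeVol_le (hmax P hP hxP)
    have hconst : (d : ℝ≥0∞) * 3 ^ (d - 1) = ENNReal.ofReal (d * 3 ^ (d - 1)) := by norm_cast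
    refine (Shear.tsum_cubeVol_rpow_mul_indicator_le γ Γ x Px.j hscale).trans_eq ?_
    rw [Shear.two_pow_pred_mul_two_rpow (by omega), hconst,
      ENNReal.ofReal_mul_pow_mul_one_sub_inv (by positivity) hρ₀ hρ₁, Shear.cubeVol_rpow]
end

section
/- Let d ≥ 2, s₁, s₂ ∈ ℝ, 0 < p₁, p₂ < ∞, 0 < q₁ ≤ ∞ with p₁ ≠ q₁. Set α = p₁(s₂ − 1/p₂ − s₁ + 1/p₁) and β = α − p₁(d−1)/(q₁(d+1)). Then there exists C > 0, depending only on d, s₁, s₂, p₁, p₂ and q₁, such that for every Γ ⊂ 𝒬_AB with ν_β(Γ) < ∞, ‖ Σ_{P∈Γ} |Q_P|^{s₂ − 1/p₂ + 1/2} e_P ‖_{f^{s₁,q₁}_{p₁}(AB)} ≤ C ( ν_β(Γ) )^{1/p₁}. -/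
open scoped ENNReal NNReal
open MeasureTheory

/-!
Write `p = p₁`, `q = q₁` and `δ = s₂ - 1/p₂ - s₁`. The `p`-th power of the quasi-norm is
`∫ (∑_{P ∈ Γ} |Q_P|^{δq} χ_{Q_P})^{p/q}`. When `p ≤ q` the `ℓ^q` norm is dominated by the `ℓ^p`
norm, and integrating gives `∑_{P ∈ Γ} |Q_P|^{δp + 1} ≤ ν_β(Γ)` because `|Q_P| ≤ 1`.
When `q < p`, apply Hölder with exponent `r = p/q` against the weights `|Q_P|^γ χ_{Q_P}(x)`.
Their sum is bounded uniformly in `x` as soon as `γ > (d-1)/(d+1)`: for a fixed direction, scale `j`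
and shear the cubes `Q_P` tile space, and there are `O(2^{j(d-1)})` shears at scale `j`. The price
is a factor `|Q_P|^{-γ(r-1)}`, and `γ = (d-1)/(d+1) · p/(p-q)` makes it `|Q_P|^{-p(d-1)/(q(d+1))}`,
which is exactly the loss built into `β`.
-/

section SequenceInequalities

variable {ι : Type*}

namespace ENNReal

theorem rpow_tsum_le_tsum_rpow {t : ℝ} (ht₀ : 0 < t) (ht₁ : t ≤ 1) (f : ι → ℝ≥0∞) :
    (∑' i, f i) ^ t ≤ ∑' i, f i ^ t := by
  have hfin (s : Finset ι) : (∑ i ∈ s, f i) ^ t ≤ ∑ i ∈ s, f i ^ t := by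
    classical
    induction s using Finset.induction with
    | empty => simp [ENNReal.zero_rpow_of_pos ht₀]
    | insert i s hi ih =>
      rw [Finset.sum_insert hi, Finset.sum_insert hi]
      exact (ENNReal.rpow_add_le_add_rpow _ _ ht₀.le ht₁).trans (by gcongr)
  have hsum : ∑' i, f i ≤ (∑' i, f i ^ t) ^ t⁻¹ := by
    rw [ENNReal.tsum_eq_iSup_sum]
    refine iSup_le fun s => ?_
    rw [← ENNReal.rpow_rpow_inv ht₀.ne' (∑ i ∈ s, f i)]
    gcongr
    exact (hfin s).trans (ENNReal.sum_le_tsum s)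
  simpa [ENNReal.rpow_inv_rpow ht₀.ne'] using ENNReal.rpow_le_rpow hsum ht₀.le

theorem tsum_mul_le_weight_mul_Lp {p : ℝ} (hp : 1 ≤ p) (w f : ι → ℝ≥0∞) :
    ∑' i, w i * f i ≤ (∑' i, w i) ^ (1 - p⁻¹) * (∑' i, w i * f i ^ p) ^ p⁻¹ := by
  have : 0 ≤ 1 - p⁻¹ := sub_nonneg.2 (inv_le_one_of_one_le₀ hp)
  rw [ENNReal.tsum_eq_iSup_sum]
  refine iSup_le fun s => (inner_le_weight_mul_Lp_of_nonneg s hp w f).trans ?_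
  gcongr <;> exact ENNReal.sum_le_tsum s

theorem rpow_tsum_mul_le {p : ℝ} (hp : 1 ≤ p) (w f : ι → ℝ≥0∞) :
    (∑' i, w i * f i) ^ p ≤ (∑' i, w i) ^ (p - 1) * ∑' i, w i * f i ^ p := by
  have hp₀ : 0 < p := zero_lt_one.trans_le hp
  calc (∑' i, w i * f i) ^ p
      ≤ ((∑' i, w i) ^ (1 - p⁻¹) * (∑' i, w i * f i ^ p) ^ p⁻¹) ^ p := by
        gcongr; exact tsum_mul_le_weight_mul_Lp hp w f
    _ = (∑' i, w i) ^ (p - 1) * ∑' i, w i * f i ^ p := by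
        rw [ENNReal.mul_rpow_of_nonneg _ _ hp₀.le, ← ENNReal.rpow_mul,
          ENNReal.rpow_inv_rpow hp₀.ne', sub_mul, one_mul, inv_mul_cancel₀ hp₀.ne']

end ENNReal

theorem tsum_indicator_le_of_pairwise_disjoint {α ι : Type*} {s : ι → Set α}
    (hs : Pairwise (Function.onFun Disjoint s)) (c : ℝ≥0∞) (x : α) :
    ∑' i, (s i).indicator (fun _ => c) x ≤ c := by
  by_cases hx : ∃ i, x ∈ s i
  · obtain ⟨i, hi⟩ := hx
    rw [tsum_eq_single i fun k hk => Set.indicator_of_notMem (Set.disjoint_right.1 (hs hk) hi) _]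
    simp [hi]
  · rw [not_exists] at hx
    simp [hx]

theorem Set.indicator_const_rpow {α : Type*} (s : Set α) (c : ℝ≥0∞) {p : ℝ} (hp : 0 < p)
    (x : α) :
    s.indicator (fun _ => c) x ^ p = s.indicator (fun _ => c ^ p) x := by
  by_cases hx : x ∈ s <;> simp [hx, ENNReal.zero_rpow_of_pos hp]

noncomputable def lqNorm (q : ℝ≥0∞) (a : ι → ℝ≥0∞) : ℝ≥0∞ :=
  if q = ∞ then ⨆ i, a i else (∑' i, a i ^ q.toReal) ^ (1 / q.toReal)

theorem lqNorm_rpow_le_tsum_rpow {p : ℝ} (hp : 0 < p) {q : ℝ≥0∞} (hpq : ENNReal.ofReal p ≤ q)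
    (a : ι → ℝ≥0∞) : lqNorm q a ^ p ≤ ∑' i, a i ^ p := by
  unfold lqNorm
  split_ifs with hq
  · have : ⨆ i, a i ≤ (∑' i, a i ^ p) ^ p⁻¹ := iSup_le fun i => by
      rw [← ENNReal.rpow_rpow_inv hp.ne' (a i)]
      gcongr
      exact ENNReal.le_tsum i
    simpa [ENNReal.rpow_inv_rpow hp.ne'] using ENNReal.rpow_le_rpow this hp.le
  · have hq₀ : 0 < q.toReal := hp.trans_le (ENNReal.ofReal_le_iff_le_toReal hq |>.1 hpq)
    have hpq' : p ≤ q.toReal := ENNReal.ofReal_le_iff_le_toReal hq |>.1 hpq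
    rw [← ENNReal.rpow_mul, one_div_mul_eq_div]
    calc (∑' i, a i ^ q.toReal) ^ (p / q.toReal)
        ≤ ∑' i, (a i ^ q.toReal) ^ (p / q.toReal) :=
          ENNReal.rpow_tsum_le_tsum_rpow (div_pos hp hq₀) ((div_le_one hq₀).2 hpq') _
      _ = ∑' i, a i ^ p := by
          simp_rw [← ENNReal.rpow_mul, mul_div_cancel₀ _ hq₀.ne']

end SequenceInequalities

namespace Shear

variable {d : ℕ}

instance : Countable (Index d) :=
  Function.Injective.countable (f := fun P : Index d => (P.dir, P.j, P.l, P.k))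
    fun P Q h => by cases P; cases Q; simp_all

def unitCube (k : Fin d → ℤ) : Set (Fin d → ℝ) :=
  {y | ∀ i, (k i : ℝ) ≤ y i ∧ y i < (k i : ℝ) + 1}

noncomputable def shearMatrix (𝔡 : Fin d) (j : ℕ) (l : Fin (d - 1) → ℤ) :
    Matrix (Fin d) (Fin d) ℝ :=
  shearAinv d 𝔡 j * shearB d 𝔡 fun i => -l i

theorem shearQ_eq_image (P : Index d) :
    shearQ P = (shearMatrix P.dir P.j P.l).mulVec '' unitCube P.k := rfl

theorem unitCube_eq_pi (k : Fin d → ℤ) :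
    unitCube k = Set.univ.pi fun i => Set.Ico (k i : ℝ) (k i + 1) := by
  ext y; simp [unitCube, Set.mem_Ico]

theorem measurableSet_unitCube (k : Fin d → ℤ) : MeasurableSet (unitCube k) := by
  rw [unitCube_eq_pi]
  exact MeasurableSet.univ_pi fun _ => measurableSet_Ico

theorem volume_unitCube (k : Fin d → ℤ) : volume (unitCube k) = 1 := by
  simp [unitCube_eq_pi, volume_pi_pi]

theorem pairwise_disjoint_unitCube : Pairwise (Function.onFun Disjoint (unitCube (d := d))) := by
  intro k k' hkk'
  refine Set.disjoint_left.2 fun y hy hy' => hkk' (funext fun i => ?_)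
  exact (Int.floor_eq_iff.2 (hy i)).symm.trans (Int.floor_eq_iff.2 (hy' i))

theorem det_shearB (𝔡 : Fin d) (l : Fin (d - 1) → ℤ) : (shearB d 𝔡 l).det = 1 := by
  have hrow : shearB d 𝔡 l = (1 : Matrix (Fin d) (Fin d) ℝ).updateRow 𝔡
      (∑ c, shearB d 𝔡 l 𝔡 c • (1 : Matrix (Fin d) (Fin d) ℝ) c) := by
    ext i c
    by_cases hi : i = 𝔡
    · subst hi
      simp [Finset.sum_apply, Matrix.one_apply]
    · rw [Matrix.updateRow_ne hi]
      by_cases hic : i = c <;> simp [shearB, hi, hic, Matrix.one_apply]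
  rw [hrow, Matrix.det_updateRow_sum, Matrix.det_one, smul_eq_mul, mul_one]
  simp [shearB]

theorem det_shearAinv (𝔡 : Fin d) (j : ℕ) :
    (shearAinv d 𝔡 j).det = (2 : ℝ) ^ (-(j : ℤ) * (d + 1)) := by
  have hd : 1 ≤ d := 𝔡.pos
  rw [shearAinv, Matrix.det_diagonal, ← Finset.mul_prod_erase _ _ (Finset.mem_univ 𝔡), if_pos rfl,
    Finset.prod_congr rfl fun i hi => if_neg (Finset.mem_erase.1 hi).1, Finset.prod_const,
    Finset.card_erase_of_mem (Finset.mem_univ 𝔡), Finset.card_univ, Fintype.card_fin,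
    show (4 : ℝ) = 2 ^ (2 : ℤ) by norm_num, ← zpow_mul, ← zpow_natCast, ← zpow_mul,
    ← zpow_add₀ two_ne_zero]
  congr 1
  push_cast [hd]
  ring

theorem det_shearMatrix (𝔡 : Fin d) (j : ℕ) (l : Fin (d - 1) → ℤ) :
    (shearMatrix 𝔡 j l).det = (2 : ℝ) ^ (-(j : ℤ) * (d + 1)) := by
  rw [shearMatrix, Matrix.det_mul, det_shearB, det_shearAinv, mul_one]

theorem injective_mulVec_shearMatrix (𝔡 : Fin d) (j : ℕ) (l : Fin (d - 1) → ℤ) :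
    Function.Injective (shearMatrix 𝔡 j l).mulVec := by
  rw [Matrix.mulVec_injective_iff_isUnit, Matrix.isUnit_iff_isUnit_det, det_shearMatrix]
  exact (zpow_pos two_pos _).ne'.isUnit

theorem measurableSet_shearQ (P : Index d) : MeasurableSet (shearQ P) :=
  (measurableSet_unitCube P.k).image_of_continuousOn_injOn
    (continuous_const.matrix_mulVec continuous_id).continuousOn
    (injective_mulVec_shearMatrix _ _ _).injOn

theorem volume_shearQ (P : Index d) : volume (shearQ P) = ENNReal.ofReal (cubeVol P) := by
  have hlin : (shearMatrix P.dir P.j P.l).mulVec = Matrix.toLin' (shearMatrix P.dir P.j P.l) :=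
    funext fun y => (Matrix.toLin'_apply _ y).symm
  rw [shearQ_eq_image, hlin, Measure.addHaar_image_linearMap, LinearMap.det_toLin',
    det_shearMatrix, volume_unitCube, mul_one, abs_of_pos (zpow_pos two_pos _), cubeVol]

theorem volume_shearQ_rpow (P : Index d) (γ : ℝ) :
    volume (shearQ P) ^ γ = ((2 : ℝ≥0∞) ^ (-((d : ℝ) + 1) * γ)) ^ P.j := by
  rw [volume_shearQ, cubeVol, ← Real.rpow_intCast, ← ENNReal.ofReal_rpow_of_pos two_pos,
    ENNReal.ofReal_ofNat, ← ENNReal.rpow_mul, ← ENNReal.rpow_natCast, ← ENNReal.rpow_mul]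
  congr 1
  push_cast
  ring

theorem cubeVol_pos (P : Index d) : 0 < cubeVol P := by
  unfold cubeVol; positivity

theorem ofReal_cubeVol_rpow (P : Index d) (a : ℝ) :
    ENNReal.ofReal (cubeVol P ^ a) = volume (shearQ P) ^ a := by
  rw [volume_shearQ, ENNReal.ofReal_rpow_of_pos (cubeVol_pos P)]

theorem volume_shearQ_ne_zero (P : Index d) : volume (shearQ P) ≠ 0 := by
  simpa [volume_shearQ] using cubeVol_pos P

theorem volume_shearQ_ne_top (P : Index d) : volume (shearQ P) ≠ ∞ := by
  simp [volume_shearQ]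

theorem volume_shearQ_le_one (P : Index d) : volume (shearQ P) ≤ 1 := by
  rw [← ENNReal.rpow_one (volume (shearQ P)), volume_shearQ_rpow]
  refine pow_le_one₀ bot_le (ENNReal.rpow_le_one_of_one_le_of_neg (by norm_num) ?_)
  have : (0 : ℝ) < d + 1 := by positivity
  linarith

theorem lintegral_tsum_indicator_shearQ (h : Index d → ℝ≥0∞) :
    ∫⁻ x, ∑' P : Index d, (shearQ P).indicator (fun _ => h P) x
      = ∑' P : Index d, h P * volume (shearQ P) := by
  rw [lintegral_tsum fun P => (measurable_const.indicator (measurableSet_shearQ P)).aemeasurable]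
  exact tsum_congr fun P => lintegral_indicator_const (measurableSet_shearQ P) _

theorem pairwise_disjoint_shearQ (𝔡 : Fin d) (j : ℕ) (l : Fin (d - 1) → ℤ)
    (hl : ∀ i, |l i| ≤ 2 ^ j) :
    Pairwise (Function.onFun Disjoint fun k => shearQ ⟨𝔡, j, l, k, hl⟩) := fun _ _ hkk' =>
  (Set.disjoint_image_iff (injective_mulVec_shearMatrix 𝔡 j l)).2 (pairwise_disjoint_unitCube hkk')

theorem tsum_const_shear_le (j : ℕ) (c : ℝ≥0∞) :
    ∑' _ : {l : Fin (d - 1) → ℤ // ∀ i, |l i| ≤ 2 ^ j}, c ≤ (2 ^ (j + 2)) ^ (d - 1) * c := by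
  let toIcc (l : {l : Fin (d - 1) → ℤ // ∀ i, |l i| ≤ 2 ^ j}) :
      Fin (d - 1) → Finset.Icc (-2 ^ j : ℤ) (2 ^ j) :=
    fun i => ⟨l.1 i, Finset.mem_Icc.2 (abs_le.1 (l.2 i))⟩
  have htoIcc : Function.Injective toIcc := fun l l' h =>
    Subtype.ext (funext fun i => congrArg Subtype.val (congrFun h i))
  have hcard :
      Fintype.card (Fin (d - 1) → Finset.Icc (-2 ^ j : ℤ) (2 ^ j)) ≤ (2 ^ (j + 2)) ^ (d - 1) := by
    rw [Fintype.card_fun, Fintype.card_coe, Int.card_Icc, Fintype.card_fin]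
    refine Nat.pow_le_pow_left ?_ _
    rw [show (2 : ℤ) ^ j + 1 - -2 ^ j = ((2 * 2 ^ j + 1 : ℕ) : ℤ) by push_cast; ring,
      Int.toNat_natCast, pow_succ, pow_succ]
    have := Nat.one_le_two_pow (n := j)
    omega
  calc ∑' _ : {l : Fin (d - 1) → ℤ // ∀ i, |l i| ≤ 2 ^ j}, c
      ≤ ∑' _ : Fin (d - 1) → Finset.Icc (-2 ^ j : ℤ) (2 ^ j), c :=
        ENNReal.tsum_comp_le_tsum_of_injective htoIcc fun _ => c
    _ ≤ (2 ^ (j + 2)) ^ (d - 1) * c := by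
        rw [tsum_fintype, Finset.sum_const, Finset.card_univ, nsmul_eq_mul]
        gcongr
        exact_mod_cast hcard

def indexEquiv (d : ℕ) :
    Index d ≃ Σ (_ : Fin d) (j : ℕ), {l : Fin (d - 1) → ℤ // ∀ i, |l i| ≤ 2 ^ j} × (Fin d → ℤ) where
  toFun P := ⟨P.dir, P.j, ⟨P.l, P.hl⟩, P.k⟩
  invFun t := ⟨t.1, t.2.1, t.2.2.1.1, t.2.2.2, t.2.2.1.2⟩

theorem exists_tsum_indicator_volume_rpow_le (hd : 1 ≤ d) {γ : ℝ}
    (hγ : (d : ℝ) - 1 < ((d : ℝ) + 1) * γ) :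
    ∃ A ≠ ∞, ∀ x, ∑' P : Index d, (shearQ P).indicator (fun _ => volume (shearQ P) ^ γ) x ≤ A := by
  set ρ : ℝ≥0∞ := 2 ^ (-((d : ℝ) + 1) * γ)
  have hratio : 2 ^ (d - 1) * ρ < 1 := by
    rw [← ENNReal.rpow_natCast, ← ENNReal.rpow_add _ _ two_ne_zero ENNReal.ofNat_ne_top]
    refine ENNReal.rpow_lt_one_of_one_lt_of_neg (by norm_num) ?_
    push_cast [hd]
    linarith
  refine ⟨d * (4 ^ (d - 1) * (1 - 2 ^ (d - 1) * ρ)⁻¹), ?_, fun x => ?_⟩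
  · exact ENNReal.mul_ne_top (ENNReal.natCast_ne_top d) (ENNReal.mul_ne_top (by simp)
      (ENNReal.inv_ne_top.2 (tsub_pos_iff_lt.2 hratio).ne'))
  calc ∑' P : Index d, (shearQ P).indicator (fun _ => volume (shearQ P) ^ γ) x
      = ∑' (𝔡 : Fin d) (j : ℕ) (l : {l : Fin (d - 1) → ℤ // ∀ i, |l i| ≤ 2 ^ j})
          (k : Fin d → ℤ), (shearQ ⟨𝔡, j, l.1, k, l.2⟩).indicator (fun _ => ρ ^ j) x := by
        simp_rw [volume_shearQ_rpow]
        rw [← (indexEquiv d).symm.tsum_eq, ENNReal.tsum_sigma']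
        refine tsum_congr fun 𝔡 => ?_
        rw [ENNReal.tsum_sigma']
        exact tsum_congr fun j => ENNReal.tsum_prod'
    _ ≤ ∑' (𝔡 : Fin d) (j : ℕ) (_ : {l : Fin (d - 1) → ℤ // ∀ i, |l i| ≤ 2 ^ j}), ρ ^ j := by
        gcongr with 𝔡 j l
        exact tsum_indicator_le_of_pairwise_disjoint (pairwise_disjoint_shearQ 𝔡 j l.1 l.2) _ x
    _ ≤ ∑' (_ : Fin d) (j : ℕ), 4 ^ (d - 1) * (2 ^ (d - 1) * ρ) ^ j := by
        gcongr with 𝔡 j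
        refine (tsum_const_shear_le j _).trans (le_of_eq ?_)
        ring
    _ = d * (4 ^ (d - 1) * (1 - 2 ^ (d - 1) * ρ)⁻¹) := by
        rw [ENNReal.tsum_mul_left, ENNReal.tsum_geometric, tsum_fintype, Finset.sum_const,
          Finset.card_univ, Fintype.card_fin, nsmul_eq_mul]

theorem lqNorm_indicator_rpow_le_of_le {p : ℝ} (hp : 0 < p) {q : ℝ≥0∞}
    (hpq : ENNReal.ofReal p ≤ q) {ε : ℝ} (hε : 0 ≤ ε) (g : Index d → ℝ≥0∞) (x : Fin d → ℝ) :
    lqNorm q (fun P => (shearQ P).indicator (fun _ => g P) x) ^ p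
      ≤ ∑' P, (shearQ P).indicator (fun _ => g P ^ p * volume (shearQ P) ^ (-ε)) x := by
  refine (lqNorm_rpow_le_tsum_rpow hp hpq _).trans (ENNReal.tsum_le_tsum fun P => ?_)
  rw [Set.indicator_const_rpow _ _ hp]
  refine Set.indicator_le_indicator (le_mul_of_one_le_right bot_le ?_)
  simpa using ENNReal.rpow_le_rpow_of_exponent_ge (volume_shearQ_le_one P) (neg_nonpos.2 hε)

theorem lqNorm_indicator_rpow_le_of_lt_of_tsum_le {p q γ : ℝ} (hq : 0 < q) (hqp : q < p)
    {A : ℝ≥0∞}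
    (hA : ∀ x, ∑' P : Index d, (shearQ P).indicator (fun _ => volume (shearQ P) ^ γ) x ≤ A)
    (g : Index d → ℝ≥0∞) (x : Fin d → ℝ) :
    lqNorm (ENNReal.ofReal q) (fun P => (shearQ P).indicator (fun _ => g P) x) ^ p
      ≤ A ^ (p / q - 1) * ∑' P, (shearQ P).indicator
          (fun _ => g P ^ p * volume (shearQ P) ^ (-(γ * (p / q - 1)))) x := by
  set r := p / q
  have hr : 1 < r := (one_lt_div hq).2 hqp
  set V := fun P : Index d => volume (shearQ P)
  have hV0 := volume_shearQ_ne_zero (d := d)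
  have hVtop := volume_shearQ_ne_top (d := d)
  have hsplit (P : Index d) : (shearQ P).indicator (fun _ => g P) x ^ q
      = (shearQ P).indicator (fun _ => V P ^ γ) x * (g P ^ q * V P ^ (-γ)) := by
    by_cases hx : x ∈ shearQ P
    · simp only [Set.indicator_of_mem hx]
      rw [mul_left_comm, ← ENNReal.rpow_add _ _ (hV0 P) (hVtop P), add_neg_cancel,
        ENNReal.rpow_zero, mul_one]
    · simp [hx, ENNReal.zero_rpow_of_pos hq]
  have hrecombine (P : Index d) :
      (shearQ P).indicator (fun _ => V P ^ γ) x * (g P ^ q * V P ^ (-γ)) ^ r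
        = (shearQ P).indicator (fun _ => g P ^ p * V P ^ (-(γ * (r - 1)))) x := by
    by_cases hx : x ∈ shearQ P
    · simp only [Set.indicator_of_mem hx]
      rw [ENNReal.mul_rpow_of_nonneg _ _ (by positivity), ← ENNReal.rpow_mul, ← ENNReal.rpow_mul,
        mul_left_comm, ← ENNReal.rpow_add _ _ (hV0 P) (hVtop P), mul_div_cancel₀ _ hq.ne']
      congr 2
      ring
    · simp [hx]
  calc lqNorm (ENNReal.ofReal q) (fun P => (shearQ P).indicator (fun _ => g P) x) ^ p
      = (∑' P, (shearQ P).indicator (fun _ => V P ^ γ) x * (g P ^ q * V P ^ (-γ))) ^ r := by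
        rw [lqNorm, if_neg ENNReal.ofReal_ne_top, ENNReal.toReal_ofReal hq.le, ← ENNReal.rpow_mul,
          one_div_mul_eq_div]
        simp_rw [hsplit]
        rfl
    _ ≤ (∑' P, (shearQ P).indicator (fun _ => V P ^ γ) x) ^ (r - 1)
          * ∑' P, (shearQ P).indicator (fun _ => V P ^ γ) x * (g P ^ q * V P ^ (-γ)) ^ r :=
        ENNReal.rpow_tsum_mul_le hr.le _ _
    _ ≤ _ := by
        simp_rw [hrecombine]
        exact mul_le_mul_left (ENNReal.rpow_le_rpow (hA x) (by linarith)) _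

theorem lqNorm_indicator_rpow_le_of_lt (hd : 2 ≤ d) {p q : ℝ} (hq : 0 < q) (hqp : q < p) :
    ∃ K ≠ ∞, ∀ (g : Index d → ℝ≥0∞) (x : Fin d → ℝ),
      lqNorm (ENNReal.ofReal q) (fun P => (shearQ P).indicator (fun _ => g P) x) ^ p
        ≤ K * ∑' P, (shearQ P).indicator (fun _ => g P ^ p
          * volume (shearQ P) ^ (-(p * ((d : ℝ) - 1) / (q * ((d : ℝ) + 1))))) x := by
  have hd' : (2 : ℝ) ≤ d := by exact_mod_cast hd
  have hpq : 0 < p - q := by linarith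
  -- any `γ > (d-1)/(d+1)` keeps the overlap sum bounded; this one makes
  -- `γ (p/q - 1) = p(d-1)/(q(d+1))`
  set γ := p * ((d - 1) / (d + 1)) / (p - q) with hγ_def
  have hγ : (d : ℝ) - 1 < (d + 1) * γ := by
    have h1 : (d + 1) * γ = (d - 1) * (p / (p - q)) := by
      rw [hγ_def]; field_simp
    have h2 : 1 < p / (p - q) := (one_lt_div hpq).2 (by linarith)
    rw [h1]
    nlinarith
  have hloss : γ * (p / q - 1) = p * ((d : ℝ) - 1) / (q * ((d : ℝ) + 1)) := by
    rw [hγ_def]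
    field_simp
  obtain ⟨A, hA, hAx⟩ := exists_tsum_indicator_volume_rpow_le (by omega) hγ
  refine ⟨A ^ (p / q - 1), ENNReal.rpow_ne_top_of_nonneg ?_ hA, fun g x => ?_⟩
  · linarith [(one_lt_div hq).2 hqp]
  · simpa only [hloss] using lqNorm_indicator_rpow_le_of_lt_of_tsum_le hq hqp hAx g x

theorem exists_lqNorm_indicator_rpow_le (hd : 2 ≤ d) {p : ℝ} (hp : 0 < p) {q : ℝ≥0∞} (hq : 0 < q) :
    ∃ K ≠ ∞, ∀ (g : Index d → ℝ≥0∞) (x : Fin d → ℝ),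
      lqNorm q (fun P => (shearQ P).indicator (fun _ => g P) x) ^ p
        ≤ K * ∑' P, (shearQ P).indicator (fun _ => g P ^ p
          * volume (shearQ P) ^ (-(p * ((d : ℝ) - 1) / (q.toReal * ((d : ℝ) + 1))))) x := by
  by_cases hpq : ENNReal.ofReal p ≤ q
  · have hε : 0 ≤ p * ((d : ℝ) - 1) / (q.toReal * ((d : ℝ) + 1)) := by
      have : (2 : ℝ) ≤ d := by exact_mod_cast hd
      exact div_nonneg (mul_nonneg hp.le (by linarith)) (by positivity)
    exact ⟨1, ENNReal.one_ne_top, fun g x => by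
      simpa using lqNorm_indicator_rpow_le_of_le hp hpq hε g x⟩
  · have hq_top : q ≠ ∞ := ne_top_of_lt (not_le.1 hpq)
    have hqp : q.toReal < p := ENNReal.toReal_lt_of_lt_ofReal (not_le.1 hpq)
    simpa [ENNReal.ofReal_toReal hq_top] using
      lqNorm_indicator_rpow_le_of_lt hd (ENNReal.toReal_pos hq.ne' hq_top) hqp

theorem exists_lintegral_lqNorm_indicator_rpow_le (hd : 2 ≤ d) {p : ℝ} (hp : 0 < p) {q : ℝ≥0∞}
    (hq : 0 < q) :
    ∃ K ≠ ∞, ∀ g : Index d → ℝ≥0∞,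
      ∫⁻ x, lqNorm q (fun P => (shearQ P).indicator (fun _ => g P) x) ^ p
        ≤ K * ∑' P, g P ^ p
          * volume (shearQ P) ^ (1 - p * ((d : ℝ) - 1) / (q.toReal * ((d : ℝ) + 1))) := by
  set ε := p * ((d : ℝ) - 1) / (q.toReal * ((d : ℝ) + 1))
  obtain ⟨K, hK, hpoint⟩ := exists_lqNorm_indicator_rpow_le hd hp hq
  refine ⟨K, hK, fun g => (lintegral_mono (hpoint g)).trans (le_of_eq ?_)⟩
  rw [lintegral_const_mul' _ _ hK, lintegral_tsum_indicator_shearQ]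
  congr 1
  refine tsum_congr fun P => ?_
  rw [mul_assoc, show 1 - ε = -ε + 1 by ring,
    ENNReal.rpow_add _ _ (volume_shearQ_ne_zero P) (volume_shearQ_ne_top P), ENNReal.rpow_one]

theorem tlNorm_eq (s p : ℝ) (q : ℝ≥0∞) (c : Index d → ℂ) :
    tlNorm s p q c = (∫⁻ x, lqNorm q (fun P => (shearQ P).indicator
      (fun _ => volume (shearQ P) ^ (-s - 1 / 2) * (‖c P‖₊ : ℝ≥0∞)) x) ^ p) ^ (1 / p) := by
  have hterm (P : Index d) (x : Fin d → ℝ) :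
      ENNReal.ofReal (cubeVol P ^ (-s - 1 / 2)) * (‖c P‖₊ : ℝ≥0∞)
          * (shearQ P).indicator (fun _ => (1 : ℝ≥0∞)) x
        = (shearQ P).indicator
            (fun _ => volume (shearQ P) ^ (-s - 1 / 2) * (‖c P‖₊ : ℝ≥0∞)) x := by
    by_cases hx : x ∈ shearQ P <;> simp [hx, ofReal_cubeVol_rpow]
  simp only [tlNorm, lqNorm, hterm]

theorem nu_eq_tsum_indicator (β : ℝ) (Γ : Set (Index d)) :
    nu β Γ = ∑' P, Γ.indicator (fun P => volume (shearQ P) ^ β) P := by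
  simp only [nu, ofReal_cubeVol_rpow]
  exact tsum_subtype Γ fun P => volume (shearQ P) ^ β

theorem tlNorm_indicator_cubeVol_rpow (s p : ℝ) (q : ℝ≥0∞) (a : ℝ) (Γ : Set (Index d)) :
    tlNorm s p q (Γ.indicator fun P => ((cubeVol P ^ a : ℝ) : ℂ))
      = (∫⁻ x, lqNorm q (fun P => (shearQ P).indicator
          (fun _ => Γ.indicator (fun P => volume (shearQ P) ^ (a - s - 1 / 2)) P) x) ^ p)
          ^ (1 / p) := by
  have hterm (P : Index d) :
      volume (shearQ P) ^ (-s - 1 / 2)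
          * (‖Γ.indicator (fun P => ((cubeVol P ^ a : ℝ) : ℂ)) P‖₊ : ℝ≥0∞)
        = Γ.indicator (fun P => volume (shearQ P) ^ (a - s - 1 / 2)) P := by
    by_cases hP : P ∈ Γ
    · rw [Set.indicator_of_mem hP, Set.indicator_of_mem hP, Complex.nnnorm_real, ← enorm_eq_nnnorm,
        Real.enorm_eq_ofReal (Real.rpow_pos_of_pos (cubeVol_pos P) _).le, ofReal_cubeVol_rpow,
        ← ENNReal.rpow_add _ _ (volume_shearQ_ne_zero P) (volume_shearQ_ne_top P)]
      congr 1
      ring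
    · simp [hP]
  simp only [tlNorm_eq, hterm]

end Shear

theorem tl_upper_democracy_general (d : ℕ) (hd : 2 ≤ d) (s₁ s₂ p₁ p₂ : ℝ)
    (hp₁ : 0 < p₁) (q₁ : ℝ≥0∞) (hq₁ : 0 < q₁) :
    ∃ C : ℝ, 0 < C ∧ ∀ Γ : Set (Shear.Index d),
      Shear.nu (p₁ * (s₂ - 1 / p₂ - s₁ + 1 / p₁)
          - p₁ * ((d : ℝ) - 1) / (q₁.toReal * ((d : ℝ) + 1))) Γ < ∞ →
      Shear.tlNorm s₁ p₁ q₁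
          (Set.indicator Γ fun P => ((Shear.cubeVol P ^ (s₂ - 1 / p₂ + 1 / 2) : ℝ) : ℂ)) ≤
        ENNReal.ofReal C *
          Shear.nu (p₁ * (s₂ - 1 / p₂ - s₁ + 1 / p₁)
            - p₁ * ((d : ℝ) - 1) / (q₁.toReal * ((d : ℝ) + 1))) Γ ^ (1 / p₁) := by
  obtain ⟨K, hK, hbound⟩ := Shear.exists_lintegral_lqNorm_indicator_rpow_le hd hp₁ hq₁
  refine ⟨(K ^ (1 / p₁)).toReal + 1, by positivity, fun Γ _ => ?_⟩
  set ε := p₁ * ((d : ℝ) - 1) / (q₁.toReal * ((d : ℝ) + 1))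
  set V := fun P : Shear.Index d => volume (Shear.shearQ P)
  have hterm (P : Shear.Index d) :
      Γ.indicator (fun P => V P ^ (s₂ - 1 / p₂ + 1 / 2 - s₁ - 1 / 2)) P ^ p₁ * V P ^ (1 - ε)
        = Γ.indicator (fun P => V P ^ (p₁ * (s₂ - 1 / p₂ - s₁ + 1 / p₁) - ε)) P := by
    by_cases hP : P ∈ Γ
    · simp only [Set.indicator_of_mem hP, V]
      rw [← ENNReal.rpow_mul,
        ← ENNReal.rpow_add _ _ (Shear.volume_shearQ_ne_zero P) (Shear.volume_shearQ_ne_top P)]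
      congr 1
      field_simp
      ring
    · simp [hP, ENNReal.zero_rpow_of_pos hp₁]
  rw [Shear.tlNorm_indicator_cubeVol_rpow, Shear.nu_eq_tsum_indicator]
  calc _ ≤ (K * ∑' P, Γ.indicator (fun P => V P ^ (s₂ - 1 / p₂ + 1 / 2 - s₁ - 1 / 2)) P ^ p₁
          * V P ^ (1 - ε)) ^ (1 / p₁) := by
        gcongr
        exact hbound _
    _ = K ^ (1 / p₁) * (∑' P, Γ.indicator
          (fun P => V P ^ (p₁ * (s₂ - 1 / p₂ - s₁ + 1 / p₁) - ε)) P) ^ (1 / p₁) := by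
        simp_rw [hterm]
        rw [ENNReal.mul_rpow_of_nonneg _ _ (by positivity)]
    _ ≤ _ := by
        gcongr
        exact (ENNReal.le_ofReal_iff_toReal_le (ENNReal.rpow_ne_top_of_nonneg (by positivity) hK)
          (by positivity)).2 (by linarith)

/-- Upper democracy of Theorem 3.2: with `α = p₁(s₂−1/p₂−s₁+1/p₁)` and
`β = α − p₁(d−1)/(q₁(d+1))`, `‖Σ_{P∈Γ} e_P/‖e_P‖_{f₂}‖_{f^{s₁,q₁}_{p₁}(AB)} ≤ C ν_β(Γ)^{1/p₁}`
whenever `ν_β(Γ) < ∞`. -/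
theorem tl_upper_democracy (d : ℕ) (hd : 2 ≤ d) (s₁ s₂ p₁ p₂ : ℝ)
    (hp₁ : 0 < p₁) (hp₂ : 0 < p₂) (q₁ : ℝ≥0∞) (hq₁ : 0 < q₁)
    (hpq : q₁ ≠ ENNReal.ofReal p₁) :
    ∃ C : ℝ, 0 < C ∧ ∀ Γ : Set (Shear.Index d),
      Shear.nu (p₁ * (s₂ - 1 / p₂ - s₁ + 1 / p₁)
          - p₁ * ((d : ℝ) - 1) / (q₁.toReal * ((d : ℝ) + 1))) Γ < ∞ →
      Shear.tlNorm s₁ p₁ q₁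
          (Set.indicator Γ fun P => ((Shear.cubeVol P ^ (s₂ - 1 / p₂ + 1 / 2) : ℝ) : ℂ)) ≤
        ENNReal.ofReal C *
          Shear.nu (p₁ * (s₂ - 1 / p₂ - s₁ + 1 / p₁)
            - p₁ * ((d : ℝ) - 1) / (q₁.toReal * ((d : ℝ) + 1))) Γ ^ (1 / p₁) :=
  tl_upper_democracy_general d hd s₁ s₂ p₁ p₂ hp₁ q₁ hq₁
end
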